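/- Let A and X be categories. Form the truncated cosimplicial category associated to the nerve of A: 𝓔₀ is the category of functors from the discrete category on the set of objects of A to X, 𝓔₁ the category of functors from the discrete category on the set of morphisms of A to X, and 𝓔₂ the category of functors from the discrete category on the set of composable pairs of morphisms of A to X; the functors ∂₀, ∂₁ : 𝓔₀ ⥤ 𝓔₁ are given by reindexing along codomain and domain respectively, ι₀ : 𝓔₁ ⥤ 𝓔₀ by reindexing along the assignment of identity morphisms, and ∂₀, ∂₁, ∂₂ : 𝓔₁ ⥤ 𝓔₂ by reindexing along the maps sending a composable pair (f : a ⟶ b, g : b ⟶ c) to g, to the composite f ≫ g, and to f respectively. Then the descent category of this data — whose objects are pairs (F, φ) with F an object of 𝓔₀ and φ : ∂₁F ⟶ ∂₀F a morphism of 𝓔₁ satisfying ι₀φ = identity and ∂₁φ = (∂₂φ) ≫ (∂₀φ), and whose morphisms (F, φ) ⟶ (G, ψ) are morphisms u : F ⟶ G of 𝓔₀ with (∂₀u) after φ equal to ψ after (∂₁u) — is isomorphic as a category to the functor category A ⥤ X. -/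

import Mathlib

open CategoryTheory

universe v u w' w

section Reindex

variable (X : Type w) [Category.{w'} X]

/-- Reindexing of discrete-indexed families of objects of `X` along a function. -/
@[simps]
def reindex {S T : Type*} (f : S → T) :
    (Discrete T ⥤ X) ⥤ (Discrete S ⥤ X) where
  obj F := Discrete.functor fun s => F.obj ⟨f s⟩
  map φ := Discrete.natTrans fun s => φ.app ⟨f s.as⟩
  map_id F := by ext s; simp
  map_comp φ ψ := by ext s; simp

end Reindex

section NerveData

variable (A : Type u) [Category.{v} A]

/-- The set of morphisms of `A`. -/
def Mor : Type (max u v) := Σ a b : A, a ⟶ b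

/-- The set of composable pairs of morphisms of `A`. -/
def Cmp : Type (max u v) := Σ a b c : A, (a ⟶ b) × (b ⟶ c)

/-- Domain. -/
def domMap : Mor A → A := fun m => m.1

/-- Codomain. -/
def codMap : Mor A → A := fun m => m.2.1

/-- Identity morphisms. -/
def idsMap : A → Mor A := fun a => ⟨a, a, 𝟙 a⟩

/-- Second component of a composable pair. -/
def d₀Map : Cmp A → Mor A := fun p => ⟨p.2.1, p.2.2.1, p.2.2.2.2⟩

/-- Composite of a composable pair. -/
def d₁Map : Cmp A → Mor A := fun p => ⟨p.1, p.2.2.1, p.2.2.2.1 ≫ p.2.2.2.2⟩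

/-- First component of a composable pair. -/
def d₂Map : Cmp A → Mor A := fun p => ⟨p.1, p.2.1, p.2.2.2.1⟩

variable (X : Type w) [Category.{w'} X]

/-- An object of the descent category of the truncated cosimplicial category
`[Ner A, X]`: an `obj A`-indexed family `F` together with a morphism `φ : ∂₁F ⟶ ∂₀F`
of `ar A`-indexed families satisfying the unit and cocycle conditions. -/
structure NerveDescObj where
  F : Discrete A ⥤ X
  φ : (reindex X (domMap A)).obj F ⟶ (reindex X (codMap A)).obj F
  unit : (reindex X (idsMap A)).map φ =
    𝟙 ((reindex X (idsMap A)).obj ((reindex X (domMap A)).obj F))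
  cocycle : (reindex X (d₁Map A)).map φ =
    (reindex X (d₂Map A)).map φ ≫ (reindex X (d₀Map A)).map φ

/-- A morphism of the descent category of `[Ner A, X]`. -/
@[ext]
structure NerveDescHom (P Q : NerveDescObj A X) where
  u : P.F ⟶ Q.F
  w : P.φ ≫ (reindex X (codMap A)).map u = (reindex X (domMap A)).map u ≫ Q.φ

instance : Category (NerveDescObj A X) where
  Hom := NerveDescHom A X
  id P := ⟨𝟙 P.F, by ext x; erw [NatTrans.comp_app, NatTrans.comp_app, Discrete.natTrans_app, Discrete.natTrans_app, Category.comp_id, Category.id_comp]⟩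
  comp f g := ⟨f.u ≫ g.u, by
    simp only [Functor.map_comp, ← Category.assoc, f.w]
    simp only [Category.assoc, g.w]⟩
  id_comp f := by apply NerveDescHom.ext; exact Category.id_comp f.u
  comp_id f := by apply NerveDescHom.ext; exact Category.comp_id f.u
  assoc f g h := by apply NerveDescHom.ext; exact Category.assoc f.u g.u h.u

end NerveData


section Aux

variable {A : Type u} [Category.{v} A] {X : Type w} [Category.{w'} X]

/-- Forward functor: from descent data to a functor `A ⥤ X`. -/
def descToFun : NerveDescObj A X ⥤ (A ⥤ X) where
  obj P :=
    { obj := fun a => P.F.obj ⟨a⟩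
      map := fun {a b} f => P.φ.app ⟨(⟨a, b, f⟩ : Mor A)⟩
      map_id := fun a => NatTrans.congr_app P.unit ⟨a⟩
      map_comp := fun {a b c} f g =>
        NatTrans.congr_app P.cocycle ⟨(⟨a, b, c, f, g⟩ : Cmp A)⟩ }
  map {P Q} f :=
    { app := fun a => f.u.app ⟨a⟩
      naturality := fun {a b} g =>
        NatTrans.congr_app f.w ⟨(⟨a, b, g⟩ : Mor A)⟩ }
  map_id P := by aesop_cat
  map_comp f g := by aesop_cat

/-- Backward functor: from a functor `A ⥤ X` to descent data. -/
def funToDesc : (A ⥤ X) ⥤ NerveDescObj A X where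
  obj G :=
    { F := Discrete.functor fun a => G.obj a
      φ := Discrete.natTrans fun m => G.map m.as.2.2
      unit := by
        ext ⟨a⟩
        exact G.map_id a
      cocycle := by
        ext ⟨p⟩
        exact G.map_comp _ _ }
  map {G H} η :=
    { u := Discrete.natTrans fun a => η.app a.as
      w := by
        ext m
        exact η.naturality m.as.2.2 }
  map_id G := by apply NerveDescHom.ext; ext ⟨a⟩; rfl
  map_comp η τ := by apply NerveDescHom.ext; ext ⟨a⟩; rfl

theorem discrete_functor_eta {S : Type*} (F : Discrete S ⥤ X) :
    Discrete.functor (fun s => F.obj ⟨s⟩) = F := by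
  refine CategoryTheory.Functor.ext (fun s => rfl) ?_
  rintro ⟨a⟩ ⟨b⟩ f
  obtain rfl : a = b := f.down.down
  obtain rfl : f = 𝟙 (Discrete.mk a) := rfl
  simp

theorem natTrans_heq {C : Type*} [Category C] {F F' G G' : C ⥤ X}
    (hF : F = F') (hG : G = G') (φ : F ⟶ G) (φ' : F' ⟶ G')
    (h : ∀ x, φ.app x ≫ eqToHom (by rw [hG]) = eqToHom (by rw [hF]) ≫ φ'.app x) :
    HEq φ φ' := by
  subst hF; subst hG
  refine heq_of_eq (NatTrans.ext (funext fun x => ?_))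
  simpa using h x

theorem descObj_ext {P Q : NerveDescObj A X} (hF : P.F = Q.F) (hφ : HEq P.φ Q.φ) :
    P = Q := by
  obtain ⟨F, φ, u, c⟩ := P
  obtain ⟨F', φ', u', c'⟩ := Q
  dsimp at hF hφ
  subst hF
  cases hφ
  rfl

theorem eqToHom_u {P Q : NerveDescObj A X} (h : P = Q) :
    (eqToHom h).u = eqToHom (by rw [h]) := by
  subst h; rfl

@[simp] theorem comp_u {P Q R : NerveDescObj A X} (f : P ⟶ Q) (g : Q ⟶ R) :
    (f ≫ g).u = f.u ≫ g.u := rfl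

end Aux

/-- The descent category of the truncated cosimplicial category obtained by applying
`[-, X]` to the nerve data of `A` is isomorphic, as a category, to the functor category
`A ⥤ X`. -/
theorem nerveDesc_iso_functor_category (A : Type u) [Category.{v} A]
    (X : Type w) [Category.{w'} X] :
    ∃ (Φ : NerveDescObj A X ⥤ (A ⥤ X)) (Ψ : (A ⥤ X) ⥤ NerveDescObj A X),
      Φ ⋙ Ψ = 𝟭 (NerveDescObj A X) ∧ Ψ ⋙ Φ = 𝟭 (A ⥤ X) := by
  refine ⟨descToFun, funToDesc, ?_, ?_⟩
  · refine CategoryTheory.Functor.ext (fun P => ?_) (fun {P Q} f => ?_)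
    · refine descObj_ext (discrete_functor_eta P.F) ?_
      refine natTrans_heq (congrArg (reindex X (domMap A)).obj (discrete_functor_eta P.F))
        (congrArg (reindex X (codMap A)).obj (discrete_functor_eta P.F)) _ _ (fun x => ?_)
      show P.φ.app x ≫ eqToHom _ = eqToHom _ ≫ P.φ.app x
      simp
      exact (Category.id_comp _).symm
    · apply NerveDescHom.ext
      rw [comp_u, comp_u, eqToHom_u, eqToHom_u]
      ext x
      simp [eqToHom_app, funToDesc, descToFun]
      erw [eqToHom_app, eqToHom_app]
      exact ((Category.id_comp _).trans (Category.comp_id _)).symm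
  · refine CategoryTheory.Functor.ext (fun G => ?_) (fun {G H} η => ?_)
    · refine CategoryTheory.Functor.ext (fun a => rfl) (fun {a b} f => ?_)
      show G.map f = eqToHom _ ≫ G.map f ≫ eqToHom _
      simp
      exact (Category.id_comp _).symm
    · ext a
      simp [eqToHom_app, funToDesc, descToFun]
      erw [eqToHom_app, eqToHom_app]
      exact ((Category.id_comp _).trans (Category.comp_id _)).symm
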